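/- With $\mathfrak{g}$, $\mathfrak{t}$, $F$ as above, for any $y \in \mathfrak{g}$ and $s \in \mathbb{R}$, one has $F\big(e^{-s\,\mathrm{ad}_{Fy}} y\big) = F y$; consequently the curve $y(s) = e^{-s\,\mathrm{ad}_{Fy_0}} y_0$ satisfies the differential equation $\dot{y}(s) = [y(s), F y(s)]$ with $y(0) = y_0$. -/

import Mathlib

/-!
Write `A = ad_{F y₀}`. Since `F` is self-adjoint, `ad` is skew and `ad_{F y₀}` kills the
abelian subalgebra `𝔱 ⊇ im F`, we get `‖F (A v)‖² = ⟪A v, F² A v⟫ = -⟪v, A (F² A v)⟫ = 0`,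
i.e. `F ∘ A = 0`. Hence every positive power of `-s A` is killed by `F`, so
`F ∘ e^{-s A} = F`. The curve therefore satisfies `ẏ = -A y = [y, F y₀] = [y, F y]`.
-/

open scoped RealInnerProductSpace Nat

theorem LinearMap.IsSymmetric.apply_eq_zero_of_skew {E : Type*} [NormedAddCommGroup E]
    [InnerProductSpace ℝ E] {F D : E →ₗ[ℝ] E} (hF : F.IsSymmetric)
    (hD : ∀ x z, ⟪D x, z⟫ + ⟪x, D z⟫ = 0) (hDF : ∀ w, D (F w) = 0) (v : E) :
    F (D v) = 0 := by
  have h := hD v (F (F (D v)))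
  rw [hDF, inner_zero_right, add_zero, ← hF] at h
  exact inner_self_eq_zero.mp h

theorem mul_exp_eq_self_of_mul_eq_zero {𝕂 𝔸 : Type*} [RCLike 𝕂] [NormedRing 𝔸]
    [NormedAlgebra 𝕂 𝔸] [CompleteSpace 𝔸] {a b : 𝔸} (h : a * b = 0) :
    a * NormedSpace.exp b = a := by
  have hexp := (NormedSpace.exp_series_hasSum_exp' (𝕂 := 𝕂) b).mul_left a
  have hsingle : HasSum (fun n : ℕ => a * ((n !⁻¹ : 𝕂) • b ^ n)) a := by
    convert hasSum_single 0 fun n hn => ?_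
    · simp
    · obtain ⟨m, rfl⟩ := Nat.exists_eq_succ_of_ne_zero hn
      simp [pow_succ', ← mul_assoc, h]
  exact hexp.unique hsingle

theorem hasDerivAt_exp_neg_smul_apply {𝕂 E : Type*} [RCLike 𝕂] [NormedAddCommGroup E]
    [NormedSpace 𝕂 E] [CompleteSpace E] (A : E →L[𝕂] E) (x : E) (s : 𝕂) :
    HasDerivAt (fun s => NormedSpace.exp ((-s) • A) x)
      (-A (NormedSpace.exp ((-s) • A) x)) s := by
  have h := (hasDerivAt_exp_smul_const' A (-s)).scomp s (hasDerivAt_neg s)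
  simpa using h.clm_apply (hasDerivAt_const s x)

theorem exp_curve_solves_ode_general
    {g : Type*} [NormedAddCommGroup g] [InnerProductSpace ℝ g] [FiniteDimensional ℝ g]
    (l : g →ₗ[ℝ] g →ₗ[ℝ] g)
    (hlalt : ∀ X : g, l X X = 0)
    (hinv : ∀ X Y Z : g, ⟪l X Y, Z⟫ + ⟪Y, l X Z⟫ = 0)
    (t : Submodule ℝ g)
    (habelian : ∀ A ∈ t, ∀ B ∈ t, l A B = 0)
    (F : g →ₗ[ℝ] g)
    (hFsa : ∀ v w : g, ⟪F v, w⟫ = ⟪v, F w⟫)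
    (hFim : ∀ v : g, F v ∈ t)
    (y₀ : g) :
    (∀ s : ℝ,
      F (NormedSpace.exp ((-s) • LinearMap.toContinuousLinearMap (l (F y₀))) y₀) = F y₀)
    ∧ (NormedSpace.exp ((-(0:ℝ)) • LinearMap.toContinuousLinearMap (l (F y₀))) y₀ = y₀)
    ∧ (∀ s : ℝ,
        HasDerivAt
          (fun s' : ℝ =>
            NormedSpace.exp ((-s') • LinearMap.toContinuousLinearMap (l (F y₀))) y₀)
          (l (NormedSpace.exp ((-s) • LinearMap.toContinuousLinearMap (l (F y₀))) y₀)
            (F (NormedSpace.exp ((-s) • LinearMap.toContinuousLinearMap (l (F y₀))) y₀)))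
          s) := by
  set A : g →L[ℝ] g := LinearMap.toContinuousLinearMap (l (F y₀))
  have hFA : ∀ v, F (A v) = 0 := LinearMap.IsSymmetric.apply_eq_zero_of_skew hFsa
    (hinv (F y₀)) fun w => habelian _ (hFim y₀) _ (hFim w)
  have hconst : ∀ s : ℝ, F (NormedSpace.exp ((-s) • A) y₀) = F y₀ := fun s => by
    have hFsA : LinearMap.toContinuousLinearMap F * ((-s) • A) = 0 := by
      ext v
      simp [hFA]
    simpa using congr($(mul_exp_eq_self_of_mul_eq_zero (𝕂 := ℝ) hFsA) y₀)
  refine ⟨hconst, by simp, fun s => ?_⟩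
  convert hasDerivAt_exp_neg_smul_apply A y₀ s using 1
  rw [hconst, ← LinearMap.IsAlt.neg hlalt]
  rfl

/-- With `𝔤`, `𝔱`, `F` as before, `F (e^{-s ad_{F y₀}} y₀) = F y₀` for all `s`,
and consequently the curve `y(s) = e^{-s ad_{F y₀}} y₀` solves `ẏ = [y, F y]`, `y(0) = y₀`. -/
theorem exp_curve_solves_ode
    {g : Type*} [NormedAddCommGroup g] [InnerProductSpace ℝ g] [FiniteDimensional ℝ g]
    (l : g →ₗ[ℝ] g →ₗ[ℝ] g)
    (hlalt : ∀ X : g, l X X = 0)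
    (hljac : ∀ X Y Z : g, l X (l Y Z) = l (l X Y) Z + l Y (l X Z))
    (hinv : ∀ X Y Z : g, ⟪l X Y, Z⟫ + ⟪Y, l X Z⟫ = 0)
    (t : Submodule ℝ g)
    (htsub : ∀ A ∈ t, ∀ B ∈ t, l A B ∈ t)
    (habelian : ∀ A ∈ t, ∀ B ∈ t, l A B = 0)
    (F : g →ₗ[ℝ] g)
    (hFsa : ∀ v w : g, ⟪F v, w⟫ = ⟪v, F w⟫)
    (hFim : ∀ v : g, F v ∈ t)
    (hFperp : ∀ v ∈ tᗮ, F v = 0)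
    (y₀ : g) :
    (∀ s : ℝ,
      F (NormedSpace.exp ((-s) • LinearMap.toContinuousLinearMap (l (F y₀))) y₀) = F y₀)
    ∧ (NormedSpace.exp ((-(0:ℝ)) • LinearMap.toContinuousLinearMap (l (F y₀))) y₀ = y₀)
    ∧ (∀ s : ℝ,
        HasDerivAt
          (fun s' : ℝ =>
            NormedSpace.exp ((-s') • LinearMap.toContinuousLinearMap (l (F y₀))) y₀)
          (l (NormedSpace.exp ((-s) • LinearMap.toContinuousLinearMap (l (F y₀))) y₀)
            (F (NormedSpace.exp ((-s) • LinearMap.toContinuousLinearMap (l (F y₀))) y₀)))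
          s) :=
  exp_curve_solves_ode_general l hlalt hinv t habelian F hFsa hFim y₀
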